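/- arXiv:2109.03682 — 3 statements merged into one kernel-verified Lean document; each statement's English description precedes it below -/
import Mathlib

section
/- Fix θ, φ ∈ ℝ, λ ∈ [0,1], and c₁, c₂, c₃ ∈ [−1,1]. Let ρ = (1/4)(I₄ + c₁·σ₁⊗σ₁ + c₂·σ₂⊗σ₂ + c₃·σ₃⊗σ₃) be the Bell-diagonal 4×4 matrix, ψ = ψ(θ,φ), ψ⊥ = ψ⊥(θ,φ), Q₋ = √((1+λ)/2)·ψ⊥ψ⊥† + √((1−λ)/2)·ψψ† (square root of the effect E₋ = λψ⊥ψ⊥† + (1−λ)I₂/2), and n = (sinθ·cosφ, sinθ·sinφ, cosθ). Then Tr₂[(I₂⊗Q₋)·ρ·(I₂⊗Q₋)] = (1/4)(I₂ − λ·(c₁n₁σ₁ + c₂n₂σ₂ + c₃n₃σ₃)), whose trace is 1/2, and the fidelity of the normalized conditional state with ψ is ⟨ψ, 2·Tr₂[(I₂⊗Q₋)ρ(I₂⊗Q₋)]·ψ⟩ = 1/2 − (λ/2)(c₁n₁² + c₂n₂² + c₃n₃²). -/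
open Matrix
open Kronecker

noncomputable section

/-- The qubit state with polar angle `θ` and azimuthal angle `φ` on the Bloch sphere. -/
def psi (θ φ : ℝ) : Fin 2 → ℂ :=
  ![(Real.cos (θ/2) : ℂ), Complex.exp (φ * Complex.I) * (Real.sin (θ/2) : ℂ)]

/-- The qubit state orthogonal to `psi θ φ`. -/
def psiPerp (θ φ : ℝ) : Fin 2 → ℂ :=
  ![-(Real.sin (θ/2) : ℂ), Complex.exp (φ * Complex.I) * (Real.cos (θ/2) : ℂ)]

/-- The rank-one matrix u u†. -/
def dyad (u : Fin 2 → ℂ) : Matrix (Fin 2) (Fin 2) ℂ :=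
  Matrix.of fun i j => u i * (starRingEnd ℂ) (u j)

/-- The first Pauli matrix. -/
def sigma1 : Matrix (Fin 2) (Fin 2) ℂ := !![0, 1; 1, 0]

/-- The second Pauli matrix. -/
def sigma2 : Matrix (Fin 2) (Fin 2) ℂ := !![0, -Complex.I; Complex.I, 0]

/-- The third Pauli matrix. -/
def sigma3 : Matrix (Fin 2) (Fin 2) ℂ := !![1, 0; 0, -1]

/-- The Bell-diagonal state with correlation coefficients c₁, c₂, c₃. -/
def bellDiag (c₁ c₂ c₃ : ℝ) : Matrix (Fin 2 × Fin 2) (Fin 2 × Fin 2) ℂ :=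
  ((1/4 : ℝ) : ℂ) • ((1 : Matrix (Fin 2 × Fin 2) (Fin 2 × Fin 2) ℂ)
    + (c₁ : ℂ) • (sigma1 ⊗ₖ sigma1) + (c₂ : ℂ) • (sigma2 ⊗ₖ sigma2)
    + (c₃ : ℂ) • (sigma3 ⊗ₖ sigma3))

/-- Square root of the unsharp effect operator E₋ = λ ψ⊥ψ⊥† + (1−λ) I₂/2. -/
def sqrtEffectMinus (θ φ l : ℝ) : Matrix (Fin 2) (Fin 2) ℂ :=
  (Real.sqrt ((1+l)/2) : ℂ) • dyad (psiPerp θ φ)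
    + (Real.sqrt ((1-l)/2) : ℂ) • dyad (psi θ φ)

/-- Partial trace over the second qubit. -/
def ptrace₂ (M : Matrix (Fin 2 × Fin 2) (Fin 2 × Fin 2) ℂ) : Matrix (Fin 2) (Fin 2) ℂ :=
  Matrix.of fun i j => ∑ k : Fin 2, M (i, k) (j, k)

/-!
Write `ψψ† = (1 + n·σ)/2` and `ψ⊥ψ⊥† = (1 - n·σ)/2`. Since `ψ, ψ⊥` are orthonormal, the square
root `Q₋` squares to `E₋ = (1 - λ n·σ)/2`. Cyclicity of the trace in the second factor turns
`Tr₂[(I ⊗ Q₋) ρ (I ⊗ Q₋)]` into `Tr₂[ρ (I ⊗ E₋)] = ¼ (Tr E₋ · I + Σₖ cₖ Tr(σₖ E₋) σₖ)`, and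
everything is then read off from `Tr((x₀ + x·σ)(y₀ + y·σ)) = 2 (x₀ y₀ + x·y)`; the fidelity is
`⟨ψ, A ψ⟩ = Tr(A ψψ†)`.
-/

def pauliComb (x₀ x₁ x₂ x₃ : ℂ) : Matrix (Fin 2) (Fin 2) ℂ :=
  x₀ • 1 + x₁ • sigma1 + x₂ • sigma2 + x₃ • sigma3

theorem sigma1_eq_pauliComb : sigma1 = pauliComb 0 1 0 0 := by simp [pauliComb]

theorem sigma2_eq_pauliComb : sigma2 = pauliComb 0 0 1 0 := by simp [pauliComb]

theorem sigma3_eq_pauliComb : sigma3 = pauliComb 0 0 0 1 := by simp [pauliComb]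

theorem smul_pauliComb (c x₀ x₁ x₂ x₃ : ℂ) :
    c • pauliComb x₀ x₁ x₂ x₃ = pauliComb (c * x₀) (c * x₁) (c * x₂) (c * x₃) := by
  simp only [pauliComb, smul_add, smul_smul]

theorem trace_pauliComb (x₀ x₁ x₂ x₃ : ℂ) : (pauliComb x₀ x₁ x₂ x₃).trace = 2 * x₀ := by
  simp [pauliComb, sigma1, sigma2, sigma3, trace_fin_two]
  ring

theorem trace_pauliComb_mul_pauliComb (x₀ x₁ x₂ x₃ y₀ y₁ y₂ y₃ : ℂ) :
    (pauliComb x₀ x₁ x₂ x₃ * pauliComb y₀ y₁ y₂ y₃).trace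
      = 2 * (x₀ * y₀ + x₁ * y₁ + x₂ * y₂ + x₃ * y₃) := by
  simp [pauliComb, sigma1, sigma2, sigma3, trace_fin_two, mul_apply, Fin.sum_univ_two]
  linear_combination (-2 * x₂ * y₂) * Complex.I_sq

theorem dyad_eq_vecMulVec (u : Fin 2 → ℂ) : dyad u = vecMulVec u (star u) := rfl

theorem dyad_mul_dyad (u v : Fin 2 → ℂ) :
    dyad u * dyad v = (star u ⬝ᵥ v) • vecMulVec u (star v) := by
  simp only [dyad_eq_vecMulVec, vecMulVec_mul_vecMulVec, vecMulVec_smul]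

theorem smul_dyad_add_smul_dyad_mul_self {u v : Fin 2 → ℂ} (hu : star u ⬝ᵥ u = 1)
    (hv : star v ⬝ᵥ v = 1) (huv : star u ⬝ᵥ v = 0) (a b : ℂ) :
    (a • dyad u + b • dyad v) * (a • dyad u + b • dyad v)
      = (a * a) • dyad u + (b * b) • dyad v := by
  have hvu : star v ⬝ᵥ u = 0 := by rw [star_dotProduct, huv, star_zero]
  simp only [add_mul, mul_add, smul_mul_smul_comm, dyad_mul_dyad, hu, hv, huv, hvu, zero_smul,
    one_smul, smul_zero, add_zero, zero_add, ← dyad_eq_vecMulVec]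

theorem dotProduct_star_mulVec_eq_trace_mul_dyad (A : Matrix (Fin 2) (Fin 2) ℂ)
    (u : Fin 2 → ℂ) : star u ⬝ᵥ (A *ᵥ u) = (A * dyad u).trace := by
  rw [dyad_eq_vecMulVec, mul_vecMulVec, trace_vecMulVec, dotProduct_comm]

theorem ofReal_sin_sq_add_cos_sq (x : ℝ) :
    (Real.sin x : ℂ) ^ 2 + (Real.cos x : ℂ) ^ 2 = 1 := by
  exact_mod_cast Real.sin_sq_add_cos_sq x

theorem exp_ofReal_mul_I_eq (φ : ℝ) :
    Complex.exp (φ * Complex.I) = (Real.cos φ : ℂ) + (Real.sin φ : ℂ) * Complex.I := by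
  rw [Complex.exp_mul_I]
  norm_cast

theorem exp_ofReal_mul_I_mul_conj (φ : ℝ) :
    Complex.exp (φ * Complex.I) * (starRingEnd ℂ) (Complex.exp (φ * Complex.I)) = 1 := by
  rw [← Complex.exp_conj, ← Complex.exp_add]
  simp

theorem star_psi_dotProduct_psi (θ φ : ℝ) : star (psi θ φ) ⬝ᵥ psi θ φ = 1 := by
  simp only [dotProduct, psi, Pi.star_apply, RCLike.star_def, Fin.sum_univ_two, Fin.isValue,
    cons_val_zero, Complex.conj_ofReal, cons_val_one, cons_val_fin_one, map_mul]
  linear_combination (Real.sin (θ / 2) : ℂ) ^ 2 * exp_ofReal_mul_I_mul_conj φ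
    + ofReal_sin_sq_add_cos_sq (θ / 2)

theorem star_psiPerp_dotProduct_psiPerp (θ φ : ℝ) :
    star (psiPerp θ φ) ⬝ᵥ psiPerp θ φ = 1 := by
  simp only [dotProduct, psiPerp, Pi.star_apply, RCLike.star_def, Fin.sum_univ_two, Fin.isValue,
    cons_val_zero, map_neg, Complex.conj_ofReal, mul_neg, neg_mul, neg_neg, cons_val_one,
    cons_val_fin_one, map_mul]
  linear_combination (Real.cos (θ / 2) : ℂ) ^ 2 * exp_ofReal_mul_I_mul_conj φ
    + ofReal_sin_sq_add_cos_sq (θ / 2)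

theorem star_psiPerp_dotProduct_psi (θ φ : ℝ) : star (psiPerp θ φ) ⬝ᵥ psi θ φ = 0 := by
  simp only [dotProduct, psiPerp, Pi.star_apply, RCLike.star_def, psi, Fin.sum_univ_two,
    Fin.isValue, cons_val_zero, map_neg, Complex.conj_ofReal, neg_mul, cons_val_one,
    cons_val_fin_one, map_mul]
  linear_combination (Real.sin (θ / 2) : ℂ) * (Real.cos (θ / 2) : ℂ) * exp_ofReal_mul_I_mul_conj φ

theorem dyad_psi (θ φ : ℝ) : dyad (psi θ φ) = pauliComb (1/2)
    (Real.sin θ * Real.cos φ / 2) (Real.sin θ * Real.sin φ / 2) (Real.cos θ / 2) := by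
  obtain ⟨α, rfl⟩ : ∃ α, θ = 2 * α := ⟨θ / 2, by ring⟩
  ext i j
  fin_cases i <;> fin_cases j <;>
    simp [dyad, psi, pauliComb, sigma1, sigma2, sigma3, exp_ofReal_mul_I_eq, Real.sin_two_mul,
      Real.cos_two_mul, Complex.conj_ofReal, -Complex.ofReal_cos, -Complex.ofReal_sin]
  · ring
  · ring
  · ring
  · linear_combination ofReal_sin_sq_add_cos_sq α
      + (Real.sin α : ℂ) ^ 2 * ofReal_sin_sq_add_cos_sq φ
      - (Real.sin α : ℂ) ^ 2 * (Real.sin φ : ℂ) ^ 2 * Complex.I_sq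

theorem dyad_psiPerp (θ φ : ℝ) : dyad (psiPerp θ φ) = pauliComb (1/2)
    (-(Real.sin θ * Real.cos φ / 2)) (-(Real.sin θ * Real.sin φ / 2)) (-(Real.cos θ / 2)) := by
  obtain ⟨α, rfl⟩ : ∃ α, θ = 2 * α := ⟨θ / 2, by ring⟩
  ext i j
  fin_cases i <;> fin_cases j <;>
    simp [dyad, psiPerp, pauliComb, sigma1, sigma2, sigma3, exp_ofReal_mul_I_eq, Real.sin_two_mul,
      Real.cos_two_mul, Complex.conj_ofReal, -Complex.ofReal_cos, -Complex.ofReal_sin]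
  · linear_combination ofReal_sin_sq_add_cos_sq α
  · ring
  · ring
  · linear_combination (Real.cos α : ℂ) ^ 2 * ofReal_sin_sq_add_cos_sq φ
      - (Real.cos α : ℂ) ^ 2 * (Real.sin φ : ℂ) ^ 2 * Complex.I_sq

theorem sqrtEffectMinus_mul_self (θ φ : ℝ) {l : ℝ} (hl₀ : -1 ≤ l) (hl₁ : l ≤ 1) :
    sqrtEffectMinus θ φ l * sqrtEffectMinus θ φ l =
      pauliComb (1/2) (-(l * (Real.sin θ * Real.cos φ) / 2))
        (-(l * (Real.sin θ * Real.sin φ) / 2)) (-(l * Real.cos θ / 2)) := by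
  have sqrt_mul_self : ∀ x : ℝ, 0 ≤ x → (Real.sqrt x : ℂ) * Real.sqrt x = x := fun x hx => by
    exact_mod_cast Real.mul_self_sqrt hx
  rw [sqrtEffectMinus, smul_dyad_add_smul_dyad_mul_self (star_psiPerp_dotProduct_psiPerp θ φ)
    (star_psi_dotProduct_psi θ φ) (star_psiPerp_dotProduct_psi θ φ),
    sqrt_mul_self _ (by linarith), sqrt_mul_self _ (by linarith), dyad_psi, dyad_psiPerp,
    smul_pauliComb, smul_pauliComb]
  simp only [pauliComb]
  push_cast
  module

theorem ptrace₂_add (M N : Matrix (Fin 2 × Fin 2) (Fin 2 × Fin 2) ℂ) :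
    ptrace₂ (M + N) = ptrace₂ M + ptrace₂ N := by
  ext i j
  simp [ptrace₂, Finset.sum_add_distrib]

theorem ptrace₂_smul (c : ℂ) (M : Matrix (Fin 2 × Fin 2) (Fin 2 × Fin 2) ℂ) :
    ptrace₂ (c • M) = c • ptrace₂ M := by
  ext i j
  simp only [ptrace₂, of_apply, Matrix.smul_apply, smul_eq_mul, Finset.mul_sum]

theorem ptrace₂_kronecker (A B : Matrix (Fin 2) (Fin 2) ℂ) :
    ptrace₂ (A ⊗ₖ B) = B.trace • A := by
  ext i j
  simp only [ptrace₂, trace, diag, of_apply, kroneckerMap_apply, Matrix.smul_apply, smul_eq_mul]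
  rw [← Finset.mul_sum, mul_comm]

theorem ptrace₂_one_kronecker_mul_mul_one_kronecker (Q R : Matrix (Fin 2) (Fin 2) ℂ)
    (M : Matrix (Fin 2 × Fin 2) (Fin 2 × Fin 2) ℂ) :
    ptrace₂ ((1 ⊗ₖ Q) * M * (1 ⊗ₖ R)) = ptrace₂ (M * (1 ⊗ₖ (R * Q))) := by
  ext i j
  simp [ptrace₂, mul_apply, one_apply, Fintype.sum_prod_type, Fin.sum_univ_two]
  ring

theorem ptrace₂_bellDiag_mul_one_kronecker (c₁ c₂ c₃ : ℝ) (E : Matrix (Fin 2) (Fin 2) ℂ) :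
    ptrace₂ (bellDiag c₁ c₂ c₃ * (1 ⊗ₖ E)) = ((1/4 : ℝ) : ℂ) • pauliComb E.trace
      (c₁ * (sigma1 * E).trace) (c₂ * (sigma2 * E).trace) (c₃ * (sigma3 * E).trace) := by
  rw [bellDiag, ← one_kronecker_one]
  simp only [smul_mul, add_mul, ← mul_kronecker_mul, one_mul, mul_one, ptrace₂_add,
    ptrace₂_smul, ptrace₂_kronecker, pauliComb, smul_smul]

theorem conditional_state_bell_diagonal_general (θ φ l c₁ c₂ c₃ : ℝ)
    (hl : l ∈ Set.Icc (0:ℝ) 1) :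
    ptrace₂ (((1 : Matrix (Fin 2) (Fin 2) ℂ) ⊗ₖ sqrtEffectMinus θ φ l) * bellDiag c₁ c₂ c₃
        * ((1 : Matrix (Fin 2) (Fin 2) ℂ) ⊗ₖ sqrtEffectMinus θ φ l))
      = ((1/4 : ℝ) : ℂ) • ((1 : Matrix (Fin 2) (Fin 2) ℂ)
          - (l : ℂ) • (((c₁ * (Real.sin θ * Real.cos φ) : ℝ) : ℂ) • sigma1
              + ((c₂ * (Real.sin θ * Real.sin φ) : ℝ) : ℂ) • sigma2
              + ((c₃ * Real.cos θ : ℝ) : ℂ) • sigma3)) ∧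
    (ptrace₂ (((1 : Matrix (Fin 2) (Fin 2) ℂ) ⊗ₖ sqrtEffectMinus θ φ l) * bellDiag c₁ c₂ c₃
        * ((1 : Matrix (Fin 2) (Fin 2) ℂ) ⊗ₖ sqrtEffectMinus θ φ l))).trace = 1/2 ∧
    star (psi θ φ) ⬝ᵥ
        (((2 : ℂ) • ptrace₂ (((1 : Matrix (Fin 2) (Fin 2) ℂ) ⊗ₖ sqrtEffectMinus θ φ l)
            * bellDiag c₁ c₂ c₃
            * ((1 : Matrix (Fin 2) (Fin 2) ℂ) ⊗ₖ sqrtEffectMinus θ φ l))).mulVec (psi θ φ))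
      = ((1/2 - (l/2) * (c₁ * (Real.sin θ * Real.cos φ)^2 + c₂ * (Real.sin θ * Real.sin φ)^2
          + c₃ * (Real.cos θ)^2) : ℝ) : ℂ) := by
  have hcond : ptrace₂ ((1 ⊗ₖ sqrtEffectMinus θ φ l) * bellDiag c₁ c₂ c₃
      * (1 ⊗ₖ sqrtEffectMinus θ φ l)) = pauliComb (1/4)
        (-(l * c₁ * (Real.sin θ * Real.cos φ) / 4)) (-(l * c₂ * (Real.sin θ * Real.sin φ) / 4))
        (-(l * c₃ * Real.cos θ / 4)) := by
    rw [ptrace₂_one_kronecker_mul_mul_one_kronecker,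
      sqrtEffectMinus_mul_self θ φ (by linarith [hl.1]) hl.2, ptrace₂_bellDiag_mul_one_kronecker,
      sigma1_eq_pauliComb, sigma2_eq_pauliComb, sigma3_eq_pauliComb, trace_pauliComb,
      trace_pauliComb_mul_pauliComb, trace_pauliComb_mul_pauliComb, trace_pauliComb_mul_pauliComb,
      smul_pauliComb]
    push_cast
    congr 1 <;> ring
  rw [hcond]
  refine ⟨?_, ?_, ?_⟩
  · simp only [pauliComb]
    push_cast
    module
  · rw [trace_pauliComb]
    norm_num
  · rw [dotProduct_star_mulVec_eq_trace_mul_dyad, dyad_psi, smul_pauliComb,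
      trace_pauliComb_mul_pauliComb]
    push_cast
    ring

theorem conditional_state_bell_diagonal (θ φ l c₁ c₂ c₃ : ℝ)
    (hl : l ∈ Set.Icc (0:ℝ) 1) (hc₁ : c₁ ∈ Set.Icc (-1:ℝ) 1)
    (hc₂ : c₂ ∈ Set.Icc (-1:ℝ) 1) (hc₃ : c₃ ∈ Set.Icc (-1:ℝ) 1) :
    ptrace₂ (((1 : Matrix (Fin 2) (Fin 2) ℂ) ⊗ₖ sqrtEffectMinus θ φ l) * bellDiag c₁ c₂ c₃
        * ((1 : Matrix (Fin 2) (Fin 2) ℂ) ⊗ₖ sqrtEffectMinus θ φ l))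
      = ((1/4 : ℝ) : ℂ) • ((1 : Matrix (Fin 2) (Fin 2) ℂ)
          - (l : ℂ) • (((c₁ * (Real.sin θ * Real.cos φ) : ℝ) : ℂ) • sigma1
              + ((c₂ * (Real.sin θ * Real.sin φ) : ℝ) : ℂ) • sigma2
              + ((c₃ * Real.cos θ : ℝ) : ℂ) • sigma3)) ∧
    (ptrace₂ (((1 : Matrix (Fin 2) (Fin 2) ℂ) ⊗ₖ sqrtEffectMinus θ φ l) * bellDiag c₁ c₂ c₃
        * ((1 : Matrix (Fin 2) (Fin 2) ℂ) ⊗ₖ sqrtEffectMinus θ φ l))).trace = 1/2 ∧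
    star (psi θ φ) ⬝ᵥ
        (((2 : ℂ) • ptrace₂ (((1 : Matrix (Fin 2) (Fin 2) ℂ) ⊗ₖ sqrtEffectMinus θ φ l)
            * bellDiag c₁ c₂ c₃
            * ((1 : Matrix (Fin 2) (Fin 2) ℂ) ⊗ₖ sqrtEffectMinus θ φ l))).mulVec (psi θ φ))
      = ((1/2 - (l/2) * (c₁ * (Real.sin θ * Real.cos φ)^2 + c₂ * (Real.sin θ * Real.sin φ)^2
          + c₃ * (Real.cos θ)^2) : ℝ) : ℂ) :=
  conditional_state_bell_diagonal_general θ φ l c₁ c₂ c₃ hl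

end
end

section
/- (Lemma 2) Let n ∈ ℕ and λ₁, …, λₙ ∈ [0,1]. Set a = 2^{−n}·∏_{k=1}^{n}(1 + √(1 − λ_k²)) and b = ∏_{k=1}^{n} √(1 − λ_k²). Then 0 < a ≤ 1 and b ≤ a; consequently, the geometric quantum discord of the Bell-diagonal state with correlation coefficients c₁ = c₂ = −a, c₃ = −b, namely D = (1/2)(c₁² + c₂² + c₃² − max{c₁², c₂², c₃²}) = (1/2)(a² + b²), is strictly positive for every choice of the sharpness parameters λ₁, …, λₙ ∈ [0,1]. -/
/-!
Write `tₖ = √(1 - λₖ²) ∈ [0, 1]`. Then `a = ∏ (1 + tₖ)/2` is a product of factors in `(0, 1]`,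
and `b = ∏ tₖ` is dominated factorwise by it because `t ≤ (1 + t)/2` for `t ≤ 1`. Hence
`b² ≤ a²`, the maximum in the discord is `a²`, and `D = (a² + b²)/2 > 0` since `a > 0`.
-/

open Finset

lemma Real.sqrt_one_sub_sq_mem_Icc (x : ℝ) : √(1 - x ^ 2) ∈ Set.Icc (0 : ℝ) 1 :=
  ⟨Real.sqrt_nonneg _, Real.sqrt_le_one.mpr (by nlinarith [sq_nonneg x])⟩

section MidpointProducts

variable {ι : Type*} (s : Finset ι) {t : ι → ℝ}

lemma prod_one_add_div_two_pos (h : ∀ i ∈ s, -1 < t i) : 0 < ∏ i ∈ s, (1 + t i) / 2 :=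
  prod_pos fun i hi => by linarith [h i hi]

lemma prod_one_add_div_two_le_one (h₀ : ∀ i ∈ s, -1 ≤ t i) (h₁ : ∀ i ∈ s, t i ≤ 1) :
    ∏ i ∈ s, (1 + t i) / 2 ≤ 1 :=
  prod_le_one (fun i hi => by linarith [h₀ i hi]) fun i hi => by linarith [h₁ i hi]

lemma prod_le_prod_one_add_div_two (h₀ : ∀ i ∈ s, 0 ≤ t i) (h₁ : ∀ i ∈ s, t i ≤ 1) :
    ∏ i ∈ s, t i ≤ ∏ i ∈ s, (1 + t i) / 2 :=
  prod_le_prod h₀ fun i hi => by linarith [h₁ i hi]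

end MidpointProducts

lemma prod_one_add_div_two_pow {n : ℕ} (t : Fin n → ℝ) :
    (∏ k, (1 + t k)) / 2 ^ n = ∏ k, (1 + t k) / 2 := by
  rw [prod_div_distrib, Fin.prod_const]

noncomputable def bellDiagonalGeometricDiscord (c₁ c₂ c₃ : ℝ) : ℝ :=
  (1 / 2) * (c₁ ^ 2 + c₂ ^ 2 + c₃ ^ 2 - max (max (c₁ ^ 2) (c₂ ^ 2)) (c₃ ^ 2))

lemma bellDiagonalGeometricDiscord_self_self {a b : ℝ} (h : b ^ 2 ≤ a ^ 2) :
    bellDiagonalGeometricDiscord a a b = (1 / 2) * (a ^ 2 + b ^ 2) := by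
  rw [bellDiagonalGeometricDiscord, max_self, max_eq_left h]
  ring

theorem geometric_discord_positive_general (n : ℕ) (lam : Fin n → ℝ) :
    0 < (∏ k, (1 + Real.sqrt (1 - lam k ^ 2))) / 2 ^ n ∧
    (∏ k, (1 + Real.sqrt (1 - lam k ^ 2))) / 2 ^ n ≤ 1 ∧
    (∏ k, Real.sqrt (1 - lam k ^ 2)) ≤ (∏ k, (1 + Real.sqrt (1 - lam k ^ 2))) / 2 ^ n ∧
    (1/2) * ((-((∏ k, (1 + Real.sqrt (1 - lam k ^ 2))) / 2 ^ n))^2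
        + (-((∏ k, (1 + Real.sqrt (1 - lam k ^ 2))) / 2 ^ n))^2
        + (-(∏ k, Real.sqrt (1 - lam k ^ 2)))^2
        - max (max ((-((∏ k, (1 + Real.sqrt (1 - lam k ^ 2))) / 2 ^ n))^2)
                   ((-((∏ k, (1 + Real.sqrt (1 - lam k ^ 2))) / 2 ^ n))^2))
              ((-(∏ k, Real.sqrt (1 - lam k ^ 2)))^2))
      = (1/2) * (((∏ k, (1 + Real.sqrt (1 - lam k ^ 2))) / 2 ^ n)^2
          + (∏ k, Real.sqrt (1 - lam k ^ 2))^2) ∧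
    0 < (1/2) * (((∏ k, (1 + Real.sqrt (1 - lam k ^ 2))) / 2 ^ n)^2
          + (∏ k, Real.sqrt (1 - lam k ^ 2))^2) := by
  set t : Fin n → ℝ := fun k => √(1 - lam k ^ 2)
  have ht₀ : ∀ k ∈ univ, 0 ≤ t k := fun k _ => (Real.sqrt_one_sub_sq_mem_Icc (lam k)).1
  have ht₁ : ∀ k ∈ univ, t k ≤ 1 := fun k _ => (Real.sqrt_one_sub_sq_mem_Icc (lam k)).2
  rw [prod_one_add_div_two_pow t]
  set a := ∏ k, (1 + t k) / 2
  set b := ∏ k, t k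
  have ha : 0 < a := prod_one_add_div_two_pos univ fun k hk => by linarith [ht₀ k hk]
  have hba : b ≤ a := prod_le_prod_one_add_div_two univ ht₀ ht₁
  have hb : 0 ≤ b := prod_nonneg ht₀
  have hdiscord : bellDiagonalGeometricDiscord (-a) (-a) (-b) = (1 / 2) * (a ^ 2 + b ^ 2) := by
    rw [bellDiagonalGeometricDiscord_self_self (by nlinarith), neg_sq, neg_sq]
  exact ⟨ha, prod_one_add_div_two_le_one univ (fun k hk => by linarith [ht₀ k hk]) ht₁, hba,
    hdiscord, by positivity⟩

/-- Lemma 2: after `n` sequential unsharp measurements with sharpness parameters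
`λ₁,…,λₙ ∈ [0,1]`, the Bell-diagonal average state with correlation coefficients
`c₁ = c₂ = −a`, `c₃ = −b` has strictly positive geometric discord. -/
theorem geometric_discord_positive (n : ℕ) (lam : Fin n → ℝ)
    (hlam : ∀ k, lam k ∈ Set.Icc (0:ℝ) 1) :
    0 < (∏ k, (1 + Real.sqrt (1 - lam k ^ 2))) / 2 ^ n ∧
    (∏ k, (1 + Real.sqrt (1 - lam k ^ 2))) / 2 ^ n ≤ 1 ∧
    (∏ k, Real.sqrt (1 - lam k ^ 2)) ≤ (∏ k, (1 + Real.sqrt (1 - lam k ^ 2))) / 2 ^ n ∧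
    (1/2) * ((-((∏ k, (1 + Real.sqrt (1 - lam k ^ 2))) / 2 ^ n))^2
        + (-((∏ k, (1 + Real.sqrt (1 - lam k ^ 2))) / 2 ^ n))^2
        + (-(∏ k, Real.sqrt (1 - lam k ^ 2)))^2
        - max (max ((-((∏ k, (1 + Real.sqrt (1 - lam k ^ 2))) / 2 ^ n))^2)
                   ((-((∏ k, (1 + Real.sqrt (1 - lam k ^ 2))) / 2 ^ n))^2))
              ((-(∏ k, Real.sqrt (1 - lam k ^ 2)))^2))
      = (1/2) * (((∏ k, (1 + Real.sqrt (1 - lam k ^ 2))) / 2 ^ n)^2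
          + (∏ k, Real.sqrt (1 - lam k ^ 2))^2) ∧
    0 < (1/2) * (((∏ k, (1 + Real.sqrt (1 - lam k ^ 2))) / 2 ^ n)^2
          + (∏ k, Real.sqrt (1 - lam k ^ 2))^2) :=
  geometric_discord_positive_general n lam
end

section
/- (Theorem 1, optimality) There do NOT exist real numbers λ₁, …, λ₇ ∈ [0,1] such that for every i ∈ {1, …, 7}: 1/2 + (λ_i/2^i)·∏_{k=1}^{i−1}(1 + √(1 − λ_k²)) > 3/4. Equivalently, if λ₁, …, λ₆ ∈ [0,1] satisfy 1/2 + (λ_i/2^i)·∏_{k=1}^{i−1}(1+√(1−λ_k²)) > 3/4 for all i ≤ 6, then ∏_{k=1}^{6}(1+√(1−λ_k²)) < 32, so even a sharp measurement (λ₇ = 1) by a seventh observer cannot exceed the classical bound. Hence at most 6 observers can share the task of remote state preparation from the equatorial circle with a single initially shared singlet state. -/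
/-!
Write `P i = ∏_{k<i} (1 + √(1 - λ_k²))` and `q i = P i / 2^i`. Observer `i` beats `3/4` iff
`λ_i q_i > 1/2`, and since `q_{i+1} = q_i (1 + √(1 - λ_i²)) / 2` decreases in `λ_i`, this forces
`q_{i+1} ≤ (q_i + √(q_i² - 1/4)) / 2`. Iterating from `q_0 = 1` gives `q_6 < 0.46 < 1/2`,
i.e. `P 6 < 32`, so not even a sharp seventh measurement (`λ_6 = 1`) can beat `3/4`.
-/

open Finset Real Fin.NatCast

noncomputable section

def residualProduct (lam : ℕ → ℝ) (i : ℕ) : ℝ :=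
  ∏ k ∈ range i, (1 + √(1 - lam k ^ 2))

-- Observers are indexed from `0`: `rspFidelity lam i` is the paper's `F_{i+1}`.
def rspFidelity (lam : ℕ → ℝ) (i : ℕ) : ℝ :=
  1 / 2 + lam i / 2 ^ (i + 1) * residualProduct lam i

def nextBound (q : ℝ) : ℝ := (q + √(q ^ 2 - 1 / 4)) / 2

end

lemma residualProduct_nonneg (lam : ℕ → ℝ) (i : ℕ) : 0 ≤ residualProduct lam i :=
  prod_nonneg fun _ _ => by positivity

lemma three_quarters_lt_rspFidelity_iff (lam : ℕ → ℝ) (i : ℕ) :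
    3 / 4 < rspFidelity lam i ↔ 2 ^ i / 2 < lam i * residualProduct lam i := by
  rw [rspFidelity, pow_succ, ← sub_lt_iff_lt_add', div_mul_eq_mul_div,
    lt_div_iff₀ (by positivity)]
  constructor <;> intro h <;> linarith

lemma mul_one_add_sqrt_le_nextBound {l P s q : ℝ} (hl : 0 ≤ l) (hs : 0 ≤ s)
    (h : s / 2 < l * P) (hP : P ≤ s * q) :
    P * (1 + √(1 - l ^ 2)) ≤ 2 * s * nextBound q := by
  have hP0 : 0 ≤ P := (pos_of_mul_pos_right (by linarith) hl).le
  have hsqrt : P * √(1 - l ^ 2) ≤ s * √(q ^ 2 - 1 / 4) := calc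
    P * √(1 - l ^ 2) = √(P ^ 2 - (l * P) ^ 2) := by
      rw [← sqrt_sq hP0, ← sqrt_mul (sq_nonneg P), sqrt_sq hP0]; ring_nf
    _ ≤ √((s * q) ^ 2 - (s / 2) ^ 2) := sqrt_le_sqrt (by nlinarith)
    _ = s * √(q ^ 2 - 1 / 4) := by
      rw [← sqrt_sq hs, ← sqrt_mul (sq_nonneg s), sqrt_sq hs]; ring_nf
  rw [nextBound]
  linarith

lemma nextBound_le_of_sq_le {q r : ℝ} (hr : q ≤ 2 * r) (h : q ^ 2 - 1 / 4 ≤ (2 * r - q) ^ 2) :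
    nextBound q ≤ r := by
  have := (sqrt_le_iff.2 ⟨sub_nonneg.2 hr, h⟩)
  rw [nextBound]
  linarith

theorem residualProduct_le {lam r : ℕ → ℝ} {n : ℕ} (hr0 : 1 ≤ r 0)
    (hr : ∀ i < n, nextBound (r i) ≤ r (i + 1)) (hlam : ∀ i < n, 0 ≤ lam i)
    (hF : ∀ i < n, 3 / 4 < rspFidelity lam i) :
    residualProduct lam n ≤ 2 ^ n * r n := by
  induction n with
  | zero => simpa [residualProduct] using hr0
  | succ n ih =>
    have hprev := ih (fun i hi => hr i (by omega)) (fun i hi => hlam i (by omega))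
      (fun i hi => hF i (by omega))
    have hsucc := (three_quarters_lt_rspFidelity_iff lam n).1 (hF n n.lt_succ_self)
    calc residualProduct lam (n + 1) = residualProduct lam n * (1 + √(1 - lam n ^ 2)) :=
          prod_range_succ _ _
      _ ≤ 2 * 2 ^ n * nextBound (r n) :=
          mul_one_add_sqrt_le_nextBound (hlam n n.lt_succ_self) (by positivity) hsucc hprev
      _ ≤ 2 ^ (n + 1) * r (n + 1) := by
          rw [pow_succ']
          exact mul_le_mul_of_nonneg_left (hr n n.lt_succ_self) (by positivity)

-- Rational upper bounds for the iterates `nextBound^[i] 1`.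
def equatorialBound : ℕ → ℝ
  | 0 => 1
  | 1 => 0.934
  | 2 => 0.862
  | 3 => 0.783
  | 4 => 0.694
  | 5 => 0.59
  | _ => 0.46

lemma nextBound_equatorialBound_le {i : ℕ} (hi : i < 6) :
    nextBound (equatorialBound i) ≤ equatorialBound (i + 1) := by
  interval_cases i <;> apply nextBound_le_of_sq_le <;> norm_num [equatorialBound]

theorem residualProduct_six_lt_thirty_two {lam : ℕ → ℝ} (hlam : ∀ i < 6, 0 ≤ lam i)
    (hF : ∀ i < 6, 3 / 4 < rspFidelity lam i) : residualProduct lam 6 < 32 :=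
  calc residualProduct lam 6 ≤ 2 ^ 6 * equatorialBound 6 :=
        residualProduct_le (by norm_num [equatorialBound])
          (fun _ => nextBound_equatorialBound_le) hlam hF
    _ < 32 := by norm_num [equatorialBound]

theorem not_forall_lt_seven_three_quarters_lt_rspFidelity {lam : ℕ → ℝ}
    (hlam : ∀ i < 7, lam i ∈ Set.Icc (0 : ℝ) 1) : ¬ ∀ i < 7, 3 / 4 < rspFidelity lam i := by
  intro hF
  have hP := residualProduct_six_lt_thirty_two (fun i hi => (hlam i (by omega)).1)
    (fun i hi => hF i (by omega))
  have h6 := (three_quarters_lt_rspFidelity_iff lam 6).1 (hF 6 (by norm_num))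
  have := mul_le_of_le_one_left (residualProduct_nonneg lam 6) (hlam 6 (by norm_num)).2
  norm_num at h6
  linarith

lemma Fin.prod_Iio_eq_prod_range {M : Type*} [CommMonoid M] {n : ℕ} (f : ℕ → M) (i : Fin n) :
    ∏ k ∈ Iio i, f k = ∏ k ∈ range i, f k := by
  rw [← Nat.Iio_eq_range, ← Fin.map_valEmbedding_Iio, prod_map]
  rfl

lemma rspFidelity_natCast_comp {n : ℕ} [NeZero n] (lam : Fin n → ℝ) (i : Fin n) :
    rspFidelity (fun k : ℕ => lam k) i =
      1 / 2 + lam i / 2 ^ ((i : ℕ) + 1) * ∏ k ∈ Iio i, (1 + √(1 - lam k ^ 2)) := by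
  simp only [rspFidelity, residualProduct, Fin.cast_val_eq_self,
    ← Fin.prod_Iio_eq_prod_range (fun k : ℕ => 1 + √(1 - lam k ^ 2))]

lemma three_quarters_lt_rspFidelity_natCast_comp {n : ℕ} [NeZero n] {lam : Fin n → ℝ}
    (hF : ∀ i : Fin n,
      3 / 4 < 1 / 2 + lam i / 2 ^ ((i : ℕ) + 1) * ∏ k ∈ Iio i, (1 + √(1 - lam k ^ 2)))
    (i : ℕ) (hi : i < n) : 3 / 4 < rspFidelity (fun k : ℕ => lam k) i :=
  (hF ⟨i, hi⟩).trans_eq (rspFidelity_natCast_comp lam ⟨i, hi⟩).symm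

/-- Theorem 1 (optimality): no 7 sequential observers can all achieve average RSP
fidelity exceeding the classical bound 3/4 for the equatorial circle; equivalently,
if 6 observers succeed then the residual product is below 32, so a seventh sharp
measurement cannot beat the classical bound. -/
theorem at_most_six_bobs :
    (¬ ∃ lam : Fin 7 → ℝ, (∀ i, lam i ∈ Set.Icc (0:ℝ) 1) ∧
      ∀ i : Fin 7,
        1/2 + lam i / 2 ^ ((i : ℕ) + 1)
            * ∏ k ∈ Finset.Iio i, (1 + Real.sqrt (1 - lam k ^ 2)) > 3/4) ∧
    (∀ lam : Fin 6 → ℝ, (∀ i, lam i ∈ Set.Icc (0:ℝ) 1) →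
      (∀ i : Fin 6,
        1/2 + lam i / 2 ^ ((i : ℕ) + 1)
            * ∏ k ∈ Finset.Iio i, (1 + Real.sqrt (1 - lam k ^ 2)) > 3/4) →
      (∏ k : Fin 6, (1 + Real.sqrt (1 - lam k ^ 2))) < 32) := by
  refine ⟨fun ⟨lam, hlam, hF⟩ => ?_, fun lam hlam hF => ?_⟩
  · exact not_forall_lt_seven_three_quarters_lt_rspFidelity (fun i _ => hlam _)
      (three_quarters_lt_rspFidelity_natCast_comp hF)
  · have hP := residualProduct_six_lt_thirty_two (fun i _ => (hlam _).1)
      (three_quarters_lt_rspFidelity_natCast_comp hF)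
    simpa [residualProduct, ← Fin.prod_univ_eq_prod_range] using hP
end
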